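/- arXiv:2206.05660 — 2 statements merged into one kernel-verified Lean document; each statement's English description precedes it below -/
import Mathlib

section
/- Let i, k ≥ 3 with r = ⌊(F_i − 1)/F_k⌋ ≥ 1 (equivalently k ≤ i − 1). Then g_1(F_i, F_{i+2}, F_{i+k}) = (F_i − r·F_k − 1)·F_{i+2} + (r+1)·F_{i+k} − F_i if (F_i − r·F_k)·F_{i+2} ≥ F_{k−2}·F_i, and g_1(F_i, F_{i+2}, F_{i+k}) = (F_k − 1)·F_{i+2} + r·F_{i+k} − F_i otherwise. -/
/-- Number of representations of `n` as a nonnegative integer combination of `a`, `b`, `c`. -/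
noncomputable def repCount (a b c : ℕ) (n : ℤ) : ℕ :=
  Nat.card {v : ℕ × ℕ × ℕ // (v.1 : ℤ) * a + v.2.1 * b + v.2.2 * c = n}

/-- `g` is the `p`-Frobenius number of `a, b, c`: the largest integer with at most `p`
representations. -/
def IsPFrob (p a b c : ℕ) (g : ℤ) : Prop :=
  IsGreatest {n : ℤ | repCount a b c n ≤ p} g

/-- Lucas numbers. -/
def lucas : ℕ → ℕ
  | 0 => 2
  | 1 => 1
  | n + 2 => lucas n + lucas (n + 1)

lemma repFinite (a b c : ℕ) (ha : 0 < a) (hb : 0 < b) (hc : 0 < c) (n : ℤ) :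
    Finite {v : ℕ × ℕ × ℕ // (v.1 : ℤ) * a + v.2.1 * b + v.2.2 * c = n} := by
  set N := n.toNat + 1 with hN
  have bound : ∀ v : {v : ℕ × ℕ × ℕ // (v.1 : ℤ) * a + v.2.1 * b + v.2.2 * c = n},
      v.1.1 < N ∧ v.1.2.1 < N ∧ v.1.2.2 < N := by
    rintro ⟨⟨x, y, z⟩, hv⟩
    simp only at hv
    have hx : (x : ℤ) ≤ n := by
      have h1 : (x:ℤ) * 1 ≤ (x:ℤ) * a := by
        apply mul_le_mul_of_nonneg_left _ (by positivity)
        exact_mod_cast ha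
      have h2 : (0:ℤ) ≤ (y:ℤ) * b := by positivity
      have h3 : (0:ℤ) ≤ (z:ℤ) * c := by positivity
      linarith
    have hy : (y : ℤ) ≤ n := by
      have h1 : (y:ℤ) * 1 ≤ (y:ℤ) * b := by
        apply mul_le_mul_of_nonneg_left _ (by positivity)
        exact_mod_cast hb
      have h2 : (0:ℤ) ≤ (x:ℤ) * a := by positivity
      have h3 : (0:ℤ) ≤ (z:ℤ) * c := by positivity
      linarith
    have hz : (z : ℤ) ≤ n := by
      have h1 : (z:ℤ) * 1 ≤ (z:ℤ) * c := by
        apply mul_le_mul_of_nonneg_left _ (by positivity)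
        exact_mod_cast hc
      have h2 : (0:ℤ) ≤ (x:ℤ) * a := by positivity
      have h3 : (0:ℤ) ≤ (y:ℤ) * b := by positivity
      linarith
    have hn0 : 0 ≤ n := le_trans (by positivity) hx
    refine ⟨?_, ?_, ?_⟩ <;> simp only [hN, Nat.lt_succ_iff] <;>
      [exact (Int.le_toNat hn0).mpr hx; exact (Int.le_toNat hn0).mpr hy;
       exact (Int.le_toNat hn0).mpr hz]
  apply Finite.of_injective (fun v => ((⟨v.1.1, (bound v).1⟩ : Fin N),
    (⟨v.1.2.1, (bound v).2.1⟩ : Fin N), (⟨v.1.2.2, (bound v).2.2⟩ : Fin N)))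
  rintro ⟨⟨x, y, z⟩, hv⟩ ⟨⟨x', y', z'⟩, hv'⟩ h
  simp only [Prod.mk.injEq, Fin.mk.injEq] at h
  simp [Prod.ext_iff, h.1, h.2.1, h.2.2]

lemma dvd_nonneg_of_neg_lt {a d : ℤ} (ha : 0 < a) (h : a ∣ d) (h2 : -a < d) : 0 ≤ d := by
  rcases h with ⟨t, rfl⟩
  have ht : (-1 : ℤ) < t := by
    by_contra hc
    push_neg at hc
    nlinarith
  have : 0 ≤ t := by omega
  positivity

lemma two_reps_le (a b c : ℕ) (ha : 0 < a) (hb : 0 < b) (hc : 0 < c) (n : ℤ)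
    (y₁ z₁ y₂ z₂ : ℕ) (hne : z₁ ≠ z₂)
    (h₁ : (a:ℤ) ∣ n - ((y₁:ℤ) * b + z₁ * c)) (h₂ : (a:ℤ) ∣ n - ((y₂:ℤ) * b + z₂ * c))
    (l₁ : (y₁:ℤ) * b + z₁ * c ≤ n) (l₂ : (y₂:ℤ) * b + z₂ * c ≤ n) :
    2 ≤ repCount a b c n := by
  haveI := repFinite a b c ha hb hc n
  have mk : ∀ (y z : ℕ), ((a:ℤ) ∣ n - ((y:ℤ) * b + z * c)) → ((y:ℤ) * b + z * c ≤ n) →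
      ∃ x : ℕ, (x : ℤ) * a + y * b + z * c = n := by
    intro y z hd hl
    rcases hd with ⟨t, ht⟩
    have ht0 : 0 ≤ t := by
      have : 0 ≤ (a:ℤ) * t := by rw [← ht]; linarith
      exact nonneg_of_mul_nonneg_right this (by exact_mod_cast ha)
    refine ⟨t.toNat, ?_⟩
    rw [Int.toNat_of_nonneg ht0]
    linarith [ht]
  obtain ⟨x₁, hx₁⟩ := mk y₁ z₁ h₁ l₁
  obtain ⟨x₂, hx₂⟩ := mk y₂ z₂ h₂ l₂
  have : Nontrivial {v : ℕ × ℕ × ℕ // (v.1 : ℤ) * a + v.2.1 * b + v.2.2 * c = n} :=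
    ⟨⟨(x₁, y₁, z₁), hx₁⟩, ⟨(x₂, y₂, z₂), hx₂⟩, by simp [Prod.ext_iff]; intros; exact fun h => hne h⟩
  exact Finite.one_lt_card

lemma rep_subsingleton_le (a b c : ℕ) (n : ℤ)
    (h : ∀ v w : ℕ × ℕ × ℕ, ((v.1 : ℤ) * a + v.2.1 * b + v.2.2 * c = n) →
      ((w.1 : ℤ) * a + w.2.1 * b + w.2.2 * c = n) → v = w) :
    repCount a b c n ≤ 1 := by
  have hs : Subsingleton {v : ℕ × ℕ × ℕ // (v.1 : ℤ) * a + v.2.1 * b + v.2.2 * c = n} :=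
    ⟨fun u v => Subtype.ext (h u.1 v.1 u.2 v.2)⟩
  rcases isEmpty_or_nonempty {v : ℕ × ℕ × ℕ // (v.1 : ℤ) * a + v.2.1 * b + v.2.2 * c = n} with he | hne
  · rw [repCount, Nat.card_of_isEmpty]; omega
  · rw [repCount, Nat.card_unique]

-- membership key, as standalone lemma
lemma memkey (a b c K L : ℕ) (g : ℤ) (m₀ R : ℕ)
    (hK0 : 0 < K) (hKa : K ≤ a) (ha0 : 0 < a) (hL : 1 ≤ L)
    (hcb : (c : ℤ) = K * b - L * a)
    (hcKL : (K : ℤ) * L ≤ c)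
    (hgcd : IsCoprime (a : ℤ) (b : ℤ))
    (hm₀ : m₀ < K) (hRl : R * K ≤ a + m₀) (hRu : a + m₀ < (R + 1) * K)
    (hg : g + a = ((a : ℤ) + m₀) * b - (R : ℤ) * (L * a)) :
    ∀ x y z : ℕ, (x : ℤ) * a + y * b + z * c = g → y = m₀ ∧ z = 0 := by
  intro x y z hv
  have ha0' : (0:ℤ) < a := by exact_mod_cast ha0
  have hK0' : (0:ℤ) < K := by exact_mod_cast hK0
  have hL0' : (0:ℤ) ≤ L := by positivity
  have hLa0 : (0:ℤ) ≤ (L:ℤ) * a := by positivity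
  have h5 : (a:ℤ) ∣ (((y:ℤ) + K * z) - m₀) * b := by
    refine ⟨(b:ℤ) + ((z:ℤ) - R) * L - 1 - x, ?_⟩
    have hv' := hv
    rw [hcb] at hv'
    linear_combination hv' + hg
  have hdvd : (a:ℤ) ∣ (((y:ℤ) + K * z) - m₀) := hgcd.dvd_of_dvd_mul_right h5
  have hm₀a : (m₀ : ℤ) < a := by
    have : (m₀:ℤ) < K := by exact_mod_cast hm₀
    have : (K:ℤ) ≤ a := by exact_mod_cast hKa
    omega
  have h6 : 0 ≤ ((y:ℤ) + K * z) - m₀ := by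
    apply dvd_nonneg_of_neg_lt ha0' hdvd
    have hy0 : (0:ℤ) ≤ y := by positivity
    have hz0 : (0:ℤ) ≤ (K:ℤ) * z := by positivity
    omega
  obtain ⟨j, hj⟩ := hdvd
  have hj0 : 0 ≤ j := by
    by_contra hc
    push_neg at hc
    nlinarith
  rcases eq_or_lt_of_le hj0 with hj1 | hj1
  · -- j = 0 : the unique solution
    have ht : (y:ℤ) + K * z = m₀ := by rw [← hj1, mul_zero] at hj; linarith
    have hm₀' : (m₀:ℤ) < K := by exact_mod_cast hm₀
    have hy0 : (0:ℤ) ≤ y := by positivity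
    have hzz : z = 0 := by
      by_contra hzc
      have h1 : 1 ≤ z := Nat.one_le_iff_ne_zero.mpr hzc
      have h1' : (1:ℤ) ≤ z := by exact_mod_cast h1
      nlinarith
    refine ⟨?_, hzz⟩
    have : (y:ℤ) = m₀ := by rw [hzz] at ht; push_cast at ht ⊢; linarith
    exact_mod_cast this
  · -- j ≥ 1 : contradiction
    exfalso
    have hval : (y:ℤ) * b + z * c = ((y:ℤ) + K * z) * b - z * (L * a) := by
      rw [hcb]; ring
    have hvle : (y:ℤ) * b + z * c ≤ g := by
      have hxa : (0:ℤ) ≤ (x:ℤ) * a := by positivity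
      linarith [hv]
    have hzK : (K:ℤ) * z ≤ (y:ℤ) + K * z := by
      linarith [show (0:ℤ) ≤ y by positivity]
    have hRl' : (R:ℤ) * K ≤ (a:ℤ) + m₀ := by exact_mod_cast hRl
    have hRu' : (a:ℤ) + m₀ < ((R:ℤ) + 1) * K := by exact_mod_cast hRu
    rcases eq_or_lt_of_le (show (1:ℤ) ≤ j by omega) with hj2 | hj2
    · -- j = 1
      have hj' : (y:ℤ) + K * z = m₀ + a := by rw [← hj2] at hj; linarith [hj]
      have h7 : (K:ℤ) * z < K * ((R:ℤ) + 1) := by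
        linarith only [hzK, hj', hRu']
      have hzR : (z:ℤ) ≤ R := by
        have := (mul_lt_mul_iff_right₀ hK0').mp h7
        linarith
      have hpos : (0:ℤ) ≤ ((R:ℤ) - z) * ((L:ℤ) * a) := mul_nonneg (by linarith) hLa0
      have e : ((m₀:ℤ) + a) * b - (z:ℤ) * ((L:ℤ) * a) -
          (((a:ℤ) + m₀) * b - (R:ℤ) * ((L:ℤ) * a)) = ((R:ℤ) - z) * ((L:ℤ) * a) := by ring
      have hge : g + a ≤ (y:ℤ) * b + z * c := by
        rw [hval, hj', hg]
        linarith [hpos, e]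
      linarith
    · -- j ≥ 2
      have hj2' : 2 ≤ j := by omega
      have hkey : (K:ℤ) * ((z:ℤ) - R) ≤ (j - 1) * a + ((K:ℤ) - 1) := by
        linarith only [hzK, hj, hRu']
      have e2 : (K:ℤ) * ((z:ℤ) - R) * ((L:ℤ) * a) ≤ ((j - 1) * a + ((K:ℤ) - 1)) * ((L:ℤ) * a) :=
        mul_le_mul_of_nonneg_right hkey hLa0
      have e3 : (0:ℤ) ≤ (j - 2) * ((a:ℤ) * c) := by
        apply mul_nonneg (by omega)
        positivity
      have e4 : (K:ℤ) * L * a ≤ c * a := mul_le_mul_of_nonneg_right hcKL (le_of_lt ha0')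
      have e5 : ((K:ℤ) - 1) * ((L:ℤ) * a) ≤ (K:ℤ) * ((L:ℤ) * a) :=
        mul_le_mul_of_nonneg_right (by linarith) hLa0
      have expand2 : (j - 1) * (a:ℤ) * ((K:ℤ) * b) - ((j - 1) * a + ((K:ℤ) - 1)) * ((L:ℤ) * a)
          = (j - 1) * ((a:ℤ) * c) - ((K:ℤ) - 1) * ((L:ℤ) * a) := by rw [hcb]; ring
      have final : (0:ℤ) ≤ (j - 1) * (a:ℤ) * ((K:ℤ) * b) - ((K:ℤ) * ((z:ℤ) - R)) * ((L:ℤ) * a) := by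
        have s2 : (0:ℤ) ≤ (j - 1) * ((a:ℤ) * c) - ((K:ℤ) - 1) * ((L:ℤ) * a) := by
          linarith only [e3, e4, e5]
        linarith only [e2, s2, expand2]
      have expand : (K:ℤ) * (((y:ℤ) * b + z * c) - (g + a)) =
          (j - 1) * (a:ℤ) * ((K:ℤ) * b) - ((K:ℤ) * ((z:ℤ) - R)) * ((L:ℤ) * a) := by
        rw [hval, hg]
        linear_combination (K:ℤ) * b * hj
      have hXnn : (0:ℤ) ≤ ((y:ℤ) * b + z * c) - (g + a) := by
        by_contra hcc
        push_neg at hcc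
        have : (K:ℤ) * (((y:ℤ) * b + z * c) - (g + a)) < K * 0 := by
          apply mul_lt_mul_of_pos_left hcc hK0'
        rw [mul_zero] at this
        linarith only [this, expand, final]
      linarith

lemma upkey (a b c K L r ρ : ℕ) (g n : ℤ)
    (hL : 1 ≤ L) (hKL2 : 2 * L ≤ K)
    (ha : a = r * K + ρ + 1) (hρ : ρ < K) (hr : 1 ≤ r)
    (hba : 2 * a ≤ b)
    (hcb : (c : ℤ) = K * b - L * a)
    (hcKL : (K : ℤ) * L ≤ c)
    (hgcd : IsCoprime (a : ℤ) (b : ℤ))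
    (hG1g : ((a : ℤ) + K - 1) * b - ((r : ℤ) + 1) * ((L:ℤ) * a) ≤ g + a)
    (hG2g : (((r : ℤ) + 1) * K - 1) * b - (r : ℤ) * ((L:ℤ) * a) ≤ g + a)
    (hgn : g < n) :
    2 ≤ repCount a b c n := by
  have hK0 : 0 < K := by omega
  have ha0 : 0 < a := by omega
  have hb0 : 0 < b := by omega
  have ha0' : (0:ℤ) < a := by exact_mod_cast ha0
  have hK0' : (0:ℤ) < K := by exact_mod_cast hK0
  have hb0' : (0:ℤ) < b := by exact_mod_cast hb0
  have hc0' : (0:ℤ) < c := by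
    have : (0:ℤ) < (K:ℤ) * L := by
      have h1 : (1:ℤ) ≤ L := by exact_mod_cast hL
      nlinarith
    linarith
  have hc0 : 0 < c := by exact_mod_cast hc0'
  have hLa0 : (0:ℤ) ≤ (L:ℤ) * a := by positivity
  have haZ : (a:ℤ) = (r:ℤ) * K + ρ + 1 := by exact_mod_cast ha
  have hb2a : (2:ℤ) * a ≤ b := by exact_mod_cast hba
  have hKb2La : 2 * ((L:ℤ) * a) ≤ (K:ℤ) * b := by
    have h1 : ((2:ℤ) * L) ≤ K := by exact_mod_cast hKL2
    have h2 : (a:ℤ) ≤ b := by linarith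
    have h3 : (0:ℤ) ≤ a := le_of_lt ha0'
    nlinarith
  have hKa : K ≤ a := by
    have h1 : 1 * K ≤ r * K := Nat.mul_le_mul_right K hr
    rw [one_mul] at h1
    rw [ha]; omega
  -- choose the residue m
  obtain ⟨u, v, huv⟩ := hgcd
  set m : ℤ := (n * v) % a with hmdef
  have hm0 : 0 ≤ m := Int.emod_nonneg _ (by positivity)
  have hma : m < a := Int.emod_lt_of_pos _ ha0'
  have hmn : (a:ℤ) ∣ m * b - n := by
    refine ⟨-(n * u) - (n * v / a) * b, ?_⟩
    have hdef : m = n * v - a * (n * v / a) := Int.emod_def (n * v) a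
    linear_combination b * hdef + n * huv
  set mn : ℕ := m.toNat with hmn'
  have hmZ : (mn : ℤ) = m := Int.toNat_of_nonneg hm0
  have hmna : mn < a := by omega
  obtain ⟨w, hw⟩ := hmn
  by_cases hmK : mn < K
  · -- small residue case
    set Mv : ℕ := mn + a with hMv
    set z₂ : ℕ := Mv / K with hz₂
    set s₂ : ℕ := Mv % K with hs₂
    have hdm : K * z₂ + s₂ = Mv := Nat.div_add_mod Mv K
    have hz₂1 : 1 ≤ z₂ := by
      rw [hz₂, Nat.le_div_iff_mul_le hK0]
      omega
    have hdmZ : (K:ℤ) * z₂ + s₂ = (Mv:ℤ) := by exact_mod_cast hdm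
    have hval₂ : (s₂:ℤ) * b + z₂ * c = (Mv:ℤ) * b - z₂ * ((L:ℤ) * a) := by
      have hs₂' : (s₂:ℤ) = (Mv:ℤ) - K * z₂ := by linarith [hdmZ]
      rw [hs₂', hcb]; ring
    have hMvZ : (Mv:ℤ) = m + a := by rw [hMv]; push_cast; linarith [hmZ]
    -- divisibility
    have dvd₁ : (a:ℤ) ∣ n - ((mn:ℤ) * b + 0 * c) := by
      refine ⟨-w, ?_⟩
      rw [hmZ]
      linear_combination -hw
    have dvd₂ : (a:ℤ) ∣ n - ((s₂:ℤ) * b + z₂ * c) := by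
      refine ⟨-w + ((z₂:ℤ) * L - b), ?_⟩
      rw [hval₂, hMvZ]
      linear_combination -hw
    -- value bounds
    have hrc : (0:ℤ) ≤ (r:ℤ) * c := by positivity
    have hmnK : (mn:ℤ) ≤ (K:ℤ) - 1 := by
      have : (mn:ℤ) < K := by exact_mod_cast hmK
      omega
    have bound₁ : (mn:ℤ) * b + 0 * c ≤ g + a := by
      have h1 : (mn:ℤ) * b ≤ ((K:ℤ) - 1) * b := mul_le_mul_of_nonneg_right hmnK (le_of_lt hb0')
      have h2 : ((K:ℤ) - 1) * b ≤ (((r : ℤ) + 1) * K - 1) * b - (r : ℤ) * ((L:ℤ) * a) := by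
        have e : (((r : ℤ) + 1) * K - 1) * b - (r : ℤ) * ((L:ℤ) * a) - ((K:ℤ) - 1) * b
            = (r:ℤ) * c := by rw [hcb]; ring
        linarith only [e, hrc]
      linarith only [h1, h2, hG2g]
    have bound₂ : (s₂:ℤ) * b + z₂ * c ≤ g + a := by
      rw [hval₂]
      by_cases hM : Mv < (r + 1) * K
      · -- z₂ = r
        have hz₂r : z₂ = r := by
          have hu : z₂ < r + 1 := by
            rw [hz₂, Nat.div_lt_iff_lt_mul hK0]; exact hM
          have hl : r ≤ z₂ := by
            rw [hz₂, Nat.le_div_iff_mul_le hK0]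
            have h9 : r * K < a := by rw [ha]; omega
            omega
          omega
        have hMu : (Mv:ℤ) ≤ ((r:ℤ) + 1) * K - 1 := by
          have : (Mv:ℤ) < ((r:ℤ)+1) * K := by exact_mod_cast hM
          omega
        rw [hz₂r]
        have := mul_le_mul_of_nonneg_right hMu (le_of_lt hb0')
        linarith only [this, hG2g]
      · -- z₂ ≥ r + 1
        push_neg at hM
        have hz₂r : r + 1 ≤ z₂ := by
          rw [hz₂, Nat.le_div_iff_mul_le hK0]; exact hM
        have hz₂r' : ((r:ℤ) + 1) ≤ z₂ := by exact_mod_cast hz₂r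
        have hMu : (Mv:ℤ) ≤ (a:ℤ) + K - 1 := by
          have h1 : (mn:ℤ) ≤ (K:ℤ) - 1 := hmnK
          rw [hMvZ]; omega
        have h1 := mul_le_mul_of_nonneg_right hMu (le_of_lt hb0')
        have h2 := mul_le_mul_of_nonneg_right hz₂r' hLa0
        linarith only [h1, h2, hG1g]
    -- conclude
    have l₁ : (mn:ℤ) * b + 0 * c ≤ n := by
      apply le_of_sub_nonneg
      apply dvd_nonneg_of_neg_lt ha0' dvd₁
      linarith only [bound₁, hgn]
    have l₂ : (s₂:ℤ) * b + z₂ * c ≤ n := by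
      apply le_of_sub_nonneg
      apply dvd_nonneg_of_neg_lt ha0' dvd₂
      linarith only [bound₂, hgn]
    exact two_reps_le a b c ha0 hb0 hc0 n mn 0 s₂ z₂ (by omega) dvd₁ dvd₂ l₁ l₂
  · -- large residue case
    push_neg at hmK
    have hq1 : 1 ≤ mn / K := by
      rw [Nat.le_div_iff_mul_le hK0]; omega
    obtain ⟨q', hq'⟩ : ∃ t, mn / K = t + 1 := ⟨mn / K - 1, by omega⟩
    set s : ℕ := mn % K with hs
    have hdm : K * (q' + 1) + s = mn := by
      have h8 := Nat.div_add_mod mn K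
      rw [hq'] at h8
      exact h8
    have hsK : s < K := Nat.mod_lt _ hK0
    have hqr : q' + 1 ≤ r := by
      have hstep : mn / K < r + 1 := by
        rw [Nat.div_lt_iff_lt_mul hK0]
        have h9 : (r + 1) * K = r * K + K := by ring
        omega
      omega
    have hdmZ : (K:ℤ) * ((q':ℤ) + 1) + s = (mn:ℤ) := by exact_mod_cast hdm
    have hsZ : (s:ℤ) = (mn:ℤ) - K * ((q':ℤ) + 1) := by linarith [hdmZ]
    have hval₁ : (s:ℤ) * b + ((q' + 1 : ℕ):ℤ) * c = (mn:ℤ) * b - ((q':ℤ) + 1) * ((L:ℤ) * a) := by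
      push_cast
      rw [hsZ, hcb]; push_cast; ring
    have hval₂ : ((s + K : ℕ):ℤ) * b + (q':ℤ) * c = (mn:ℤ) * b - (q':ℤ) * ((L:ℤ) * a) := by
      push_cast
      rw [hsZ, hcb]; push_cast; ring
    have dvd₁ : (a:ℤ) ∣ n - ((s:ℤ) * b + ((q' + 1 : ℕ):ℤ) * c) := by
      refine ⟨-w + ((q':ℤ) + 1) * L, ?_⟩
      rw [hval₁, hmZ]
      linear_combination -hw
    have dvd₂ : (a:ℤ) ∣ n - (((s + K : ℕ):ℤ) * b + (q':ℤ) * c) := by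
      refine ⟨-w + (q':ℤ) * L, ?_⟩
      rw [hval₂, hmZ]
      linear_combination -hw
    -- value bounds
    have hq'r : (q':ℤ) + 1 ≤ r := by exact_mod_cast hqr
    have bound₂ : (mn:ℤ) * b - (q':ℤ) * ((L:ℤ) * a) ≤ g + a := by
      rcases eq_or_lt_of_le hqr with hqeq | hqlt
      · -- q = r, s ≤ ρ
        have hq'' : ((q':ℤ) + 1) = r := by exact_mod_cast hqeq
        have hq''K : ((q':ℤ) + 1) * K = (r:ℤ) * K := by rw [hq'']
        have hmna' : (mn:ℤ) < a := by exact_mod_cast hmna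
        have hsρ : (s:ℤ) ≤ ρ := by linarith [hdmZ, hmna', haZ, hq''K]
        have hmnZ : (mn:ℤ) = (r:ℤ) * K + s := by linarith [hdmZ, hq''K]
        -- mn*b - (r-1)*La ≤ G1 = (a+K-1)b - (r+1)La  ⟸ (ρ - s + K)b ≥ 2La
        have key : ((ρ:ℤ) - s + K) * b ≥ 2 * ((L:ℤ) * a) := by
          have h1 : (K:ℤ) * b ≤ ((ρ:ℤ) - s + K) * b := by
            apply mul_le_mul_of_nonneg_right _ (le_of_lt hb0')
            linarith only [hsρ]
          linarith only [h1, hKb2La]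
        have expand : ((a:ℤ) + K - 1) * b - ((r : ℤ) + 1) * ((L:ℤ) * a)
            - ((mn:ℤ) * b - (q':ℤ) * ((L:ℤ) * a)) = ((ρ:ℤ) - s + K) * b - 2 * ((L:ℤ) * a) := by
          linear_combination b * haZ - b * hmnZ + ((L:ℤ) * a) * hq''
        linarith only [key, expand, hG1g]
      · -- q < r
        have hd1 : (q':ℤ) + 2 ≤ r := by
          have : q' + 1 + 1 ≤ r := hqlt
          exact_mod_cast this
        have hmnu : (mn:ℤ) ≤ ((q':ℤ) + 2) * K - 1 := by
          have h1 : mn < (q' + 1 + 1) * K := by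
            have h2 : (q' + 1 + 1) * K = K * (q' + 1) + K := by ring
            omega
          have h1' : (mn:ℤ) < ((q':ℤ) + 2) * K := by exact_mod_cast h1
          linarith
        -- val₂ ≤ ((q'+2)K - 1)b - q' La ≤ G2 = ((r+1)K - 1)b - r La
        -- ⟸ (r - q' - 1) K b ≥ (r - q') La,  with d := r - q' - 1 ≥ 1
        set d : ℤ := (r:ℤ) - q' - 1 with hdd
        have hd1' : 1 ≤ d := by omega
        have key : ((d:ℤ)) * ((K:ℤ) * b) ≥ (d + 1) * ((L:ℤ) * a) := by
          have h1 : (d + 1) * ((L:ℤ) * a) ≤ (2 * d) * ((L:ℤ) * a) := by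
            apply mul_le_mul_of_nonneg_right _ hLa0
            linarith only [hd1']
          have h2 : (d:ℤ) * (2 * ((L:ℤ) * a)) ≤ d * ((K:ℤ) * b) := by
            apply mul_le_mul_of_nonneg_left hKb2La (by linarith only [hd1'])
          linarith only [h1, h2]
        have h3 : (mn:ℤ) * b ≤ (((q':ℤ) + 2) * K - 1) * b :=
          mul_le_mul_of_nonneg_right hmnu (le_of_lt hb0')
        have expand : ((((r:ℤ) + 1) * K - 1) * b - (r : ℤ) * ((L:ℤ) * a))
            - (((((q':ℤ) + 2) * K - 1) * b - (q':ℤ) * ((L:ℤ) * a)))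
            = d * ((K:ℤ) * b) - (d + 1) * ((L:ℤ) * a) := by
          rw [hdd]; ring
        linarith only [key, h3, expand, hG2g]
    have bound₁ : (mn:ℤ) * b - ((q':ℤ) + 1) * ((L:ℤ) * a) ≤ g + a := by
      linarith only [bound₂, hLa0]
    have l₁ : (s:ℤ) * b + ((q' + 1 : ℕ):ℤ) * c ≤ n := by
      apply le_of_sub_nonneg
      apply dvd_nonneg_of_neg_lt ha0' dvd₁
      rw [hval₁]
      linarith only [bound₁, hgn]
    have l₂ : ((s + K : ℕ):ℤ) * b + (q':ℤ) * c ≤ n := by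
      apply le_of_sub_nonneg
      apply dvd_nonneg_of_neg_lt ha0' dvd₂
      rw [hval₂]
      linarith only [bound₂, hgn]
    have dvd₂' : (a:ℤ) ∣ n - (((s + K : ℕ):ℤ) * b + ((q' : ℕ):ℤ) * c) := dvd₂
    exact two_reps_le a b c ha0 hb0 hc0 n s (q' + 1) (s + K) q' (by omega) dvd₁ dvd₂' l₁ l₂

lemma frob_main (a b c K L r ρ : ℕ)
    (hL : 1 ≤ L) (hKL2 : 2 * L ≤ K)
    (ha : a = r * K + ρ + 1) (hρ : ρ < K) (hr : 1 ≤ r)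
    (hba : 2 * a ≤ b)
    (hcb : (c : ℤ) = K * b - L * a)
    (hcKL : (K : ℤ) * L ≤ c)
    (hgcd : IsCoprime (a : ℤ) (b : ℤ)) :
    IsPFrob 1 a b c
      (if (L : ℤ) * a ≤ ((a : ℤ) - r * K) * b then
        ((a : ℤ) - r * K - 1) * b + ((r : ℤ) + 1) * c - a
      else ((K : ℤ) - 1) * b + (r : ℤ) * c - a) := by
  have hK0 : 0 < K := by omega
  have ha0 : 0 < a := by omega
  have hb0 : 0 < b := by omega
  have hK0' : (0:ℤ) < K := by exact_mod_cast hK0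
  have hL1' : (1:ℤ) ≤ L := by exact_mod_cast hL
  have hc0' : (0:ℤ) < c := lt_of_lt_of_le (by nlinarith) hcKL
  have haZ : (a:ℤ) = (r:ℤ) * K + ρ + 1 := by exact_mod_cast ha
  have hLa0 : (0:ℤ) ≤ (L:ℤ) * a := by positivity
  have hKa : K ≤ a := by
    have h1 : 1 * K ≤ r * K := Nat.mul_le_mul_right K hr
    rw [one_mul] at h1
    rw [ha]; omega
  set g : ℤ := (if (L : ℤ) * a ≤ ((a : ℤ) - r * K) * b then
        ((a : ℤ) - r * K - 1) * b + ((r : ℤ) + 1) * c - a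
      else ((K : ℤ) - 1) * b + (r : ℤ) * c - a) with hgdef
  have hA1 : ((a : ℤ) - r * K - 1) * b + ((r : ℤ) + 1) * c - a
      = (((a:ℤ) + K - 1) * b - ((r : ℤ) + 1) * ((L:ℤ) * a)) - a := by
    rw [hcb]; ring
  have hA2 : ((K : ℤ) - 1) * b + (r : ℤ) * c - a
      = ((((r:ℤ) + 1) * K - 1) * b - (r : ℤ) * ((L:ℤ) * a)) - a := by
    rw [hcb]; ring
  have hρ1 : ((a:ℤ) - r * K) = (ρ:ℤ) + 1 := by rw [haZ]; ring
  have hG1g : ((a : ℤ) + K - 1) * b - ((r : ℤ) + 1) * ((L:ℤ) * a) ≤ g + a := by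
    rw [hgdef]; split <;> rename_i hcnd
    · rw [hA1]; ring_nf; exact le_refl _
    · push_neg at hcnd
      rw [hρ1] at hcnd
      rw [hA2]
      have e : ((((r:ℤ) + 1) * K - 1) * b - (r : ℤ) * ((L:ℤ) * a))
          - (((a : ℤ) + K - 1) * b - ((r : ℤ) + 1) * ((L:ℤ) * a))
          = (L:ℤ) * a - ((ρ:ℤ) + 1) * b := by rw [haZ]; ring
      linarith only [e, hcnd.le]
  have hG2g : (((r : ℤ) + 1) * K - 1) * b - (r : ℤ) * ((L:ℤ) * a) ≤ g + a := by
    rw [hgdef]; split <;> rename_i hcnd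
    · rw [hρ1] at hcnd
      rw [hA1]
      have e : (((a:ℤ) + K - 1) * b - ((r : ℤ) + 1) * ((L:ℤ) * a))
          - ((((r:ℤ) + 1) * K - 1) * b - (r : ℤ) * ((L:ℤ) * a))
          = ((ρ:ℤ) + 1) * b - (L:ℤ) * a := by rw [haZ]; ring
      linarith only [e, hcnd]
    · rw [hA2]; ring_nf; exact le_refl _
  constructor
  · -- membership
    show repCount a b c g ≤ 1
    apply rep_subsingleton_le
    rintro ⟨x, y, z⟩ ⟨x', y', z'⟩ hv hw
    simp only at hv hw
    by_cases hcnd : (L:ℤ) * a ≤ ((a : ℤ) - r * K) * b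
    · have hgval : g = ((a : ℤ) - r * K - 1) * b + ((r : ℤ) + 1) * c - a := by
        rw [hgdef, if_pos hcnd]
      have hm₀c : ((K - 1 : ℕ) : ℤ) = (K:ℤ) - 1 := by omega
      have hRc : ((r + 1 : ℕ) : ℤ) = (r:ℤ) + 1 := by omega
      have hkey := memkey a b c K L g (K - 1) (r + 1) hK0 hKa ha0 hL hcb hcKL hgcd
        (by omega)
        (by have h9 : (r + 1 + 1) * K = r * K + K + K := by ring
            have h8 : (r + 1) * K = r * K + K := by ring
            omega)
        (by have h9 : (r + 1 + 1) * K = r * K + K + K := by ring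
            omega)
        (by rw [hgval, hA1, hm₀c, hRc]; ring)
      obtain ⟨hy1, hz1⟩ := hkey x y z hv
      obtain ⟨hy2, hz2⟩ := hkey x' y' z' hw
      have hx : x = x' := by
        subst hy1 hz1 hy2 hz2
        have : (x:ℤ) * a = (x':ℤ) * a := by linarith [hv, hw]
        have hxz : (x:ℤ) = x' := by
          have ha0'' : (0:ℤ) < a := by exact_mod_cast ha0
          exact mul_right_cancel₀ (by linarith) this
        exact_mod_cast hxz
      simp [Prod.ext_iff, hx, hy1, hz1, hy2, hz2]
    · have hgval : g = ((K : ℤ) - 1) * b + (r : ℤ) * c - a := by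
        rw [hgdef, if_neg hcnd]
      push_neg at hcnd
      rw [hρ1] at hcnd
      have hρ2 : ρ + 2 ≤ K := by
        by_contra hcc
        have hρK : (ρ:ℤ) + 1 = K := by omega
        rw [hρK] at hcnd
        have : (K:ℤ) * b = c + L * a := by rw [hcb]; ring
        linarith only [hcnd, this, hc0'.le]
      have hm₀c : ((K - ρ - 2 : ℕ) : ℤ) = (K:ℤ) - ρ - 2 := by omega
      have hkey := memkey a b c K L g (K - ρ - 2) r hK0 hKa ha0 hL hcb hcKL hgcd
        (by omega)
        (by have h8 : (r + 1) * K = r * K + K := by ring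
            omega)
        (by have h8 : (r + 1) * K = r * K + K := by ring
            omega)
        (by rw [hgval, hA2, hm₀c, haZ]; ring)
      obtain ⟨hy1, hz1⟩ := hkey x y z hv
      obtain ⟨hy2, hz2⟩ := hkey x' y' z' hw
      have hx : x = x' := by
        subst hy1 hz1 hy2 hz2
        have : (x:ℤ) * a = (x':ℤ) * a := by linarith [hv, hw]
        have hxz : (x:ℤ) = x' := by
          have ha0'' : (0:ℤ) < a := by exact_mod_cast ha0
          exact mul_right_cancel₀ (by linarith) this
        exact_mod_cast hxz
      simp [Prod.ext_iff, hx, hy1, hz1, hy2, hz2]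
  · -- upper bound
    intro n hn
    simp only [Set.mem_setOf_eq] at hn
    by_contra hgt
    push_neg at hgt
    have h2 := upkey a b c K L r ρ g n hL hKL2 ha hρ hr hba hcb hcKL hgcd hG1g hG2g hgt
    omega

theorem stmt7 (i k : ℕ) (hi : 3 ≤ i) (hk : 3 ≤ k)
    (hr : 1 ≤ (Nat.fib i - 1) / Nat.fib k) :
    letI F := Nat.fib
    letI r := (F i - 1) / F k
    IsPFrob 1 (F i) (F (i + 2)) (F (i + k))
      (if (F (k - 2) : ℤ) * F i ≤ ((F i : ℤ) - r * F k) * F (i + 2) then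
        ((F i : ℤ) - r * F k - 1) * F (i + 2) + ((r : ℤ) + 1) * F (i + k) - F i
      else
        ((F k : ℤ) - 1) * F (i + 2) + (r : ℤ) * F (i + k) - F i) := by
  have hK0 : 0 < Nat.fib k := Nat.fib_pos.mpr (by omega)
  have ha0 : 0 < Nat.fib i := Nat.fib_pos.mpr (by omega)
  -- k < i
  have hki : k < i := by
    have h1 : Nat.fib k ≤ Nat.fib i - 1 := by
      have := (Nat.one_le_div_iff hK0).mp hr
      omega
    by_contra hcc
    push_neg at hcc
    have := Nat.fib_mono hcc
    omega
  obtain ⟨j, rfl⟩ : ∃ j, k = j + 2 := ⟨k - 2, by omega⟩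
  simp only [Nat.add_sub_cancel]
  have hL : 1 ≤ Nat.fib j := Nat.fib_pos.mpr (by omega)
  have hKL2 : 2 * Nat.fib j ≤ Nat.fib (j + 2) := by
    rw [Nat.fib_add_two]
    have := Nat.fib_mono (show j ≤ j + 1 by omega)
    omega
  have ha : Nat.fib i = (Nat.fib i - 1) / Nat.fib (j + 2) * Nat.fib (j + 2)
      + (Nat.fib i - 1) % Nat.fib (j + 2) + 1 := by
    have h1 := Nat.div_add_mod (Nat.fib i - 1) (Nat.fib (j + 2))
    have h2 : Nat.fib (j + 2) * ((Nat.fib i - 1) / Nat.fib (j + 2))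
        = (Nat.fib i - 1) / Nat.fib (j + 2) * Nat.fib (j + 2) := Nat.mul_comm _ _
    omega
  have hρ : (Nat.fib i - 1) % Nat.fib (j + 2) < Nat.fib (j + 2) := Nat.mod_lt _ hK0
  have hba : 2 * Nat.fib i ≤ Nat.fib (i + 2) := by
    rw [Nat.fib_add_two]
    have := Nat.fib_mono (show i ≤ i + 1 by omega)
    omega
  have hnat : Nat.fib (i + (j + 2)) + Nat.fib j * Nat.fib i
      = Nat.fib (j + 2) * Nat.fib (i + 2) := by
    have h1 : i + (j + 2) = i + (j + 1) + 1 := by ring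
    rw [h1, Nat.fib_add i (j + 1), Nat.fib_add_two (n := j), Nat.fib_add_two (n := i)]
    ring
  have hcb : (Nat.fib (i + (j + 2)) : ℤ)
      = Nat.fib (j + 2) * Nat.fib (i + 2) - Nat.fib j * Nat.fib i := by
    have h := hnat
    zify at h
    linarith [h]
  have hcKL : (Nat.fib (j + 2) : ℤ) * Nat.fib j ≤ Nat.fib (i + (j + 2)) := by
    have h1 : Nat.fib (j + 2) * Nat.fib j ≤ Nat.fib (j + 2) * Nat.fib (j + 2) :=
      Nat.mul_le_mul_left _ (Nat.fib_mono (by omega))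
    have h2 : Nat.fib (j + 2) * Nat.fib (j + 2) ≤ Nat.fib ((j + 2) + (j + 2) + 1) := by
      rw [Nat.fib_add (j + 2) (j + 2)]
      exact Nat.le_add_right _ _
    have h3 : Nat.fib ((j + 2) + (j + 2) + 1) ≤ Nat.fib (i + (j + 2)) :=
      Nat.fib_mono (by omega)
    exact_mod_cast le_trans h1 (le_trans h2 h3)
  have hgcd : IsCoprime ((Nat.fib i : ℤ)) ((Nat.fib (i + 2) : ℤ)) := by
    rw [Nat.isCoprime_iff_coprime]
    have h1 : Nat.gcd (Nat.fib i) (Nat.fib (i + 2)) = Nat.fib (Nat.gcd i (i + 2)) :=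
      (Nat.fib_gcd i (i + 2)).symm
    have h2 : Nat.gcd i (i + 2) = Nat.gcd i 2 := by
      rw [show i + 2 = 2 + i by ring]
      exact Nat.gcd_add_self_right i 2
    have h3 : Nat.gcd i 2 = 1 ∨ Nat.gcd i 2 = 2 := by
      exact (Nat.dvd_prime Nat.prime_two).mp (Nat.gcd_dvd_right i 2)
    unfold Nat.Coprime
    rcases h3 with h3 | h3 <;> rw [h1, h2, h3] <;> simp
  exact frob_main (Nat.fib i) (Nat.fib (i + 2)) (Nat.fib (i + (j + 2))) (Nat.fib (j + 2))
    (Nat.fib j) ((Nat.fib i - 1) / Nat.fib (j + 2)) ((Nat.fib i - 1) % Nat.fib (j + 2))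
    hL hKL2 ha hρ hr hba hcb hcKL hgcd
end

section
/- For every integer i ≥ 3, the 2-Frobenius number of (F_i, F_{i+2}, F_{2i+2}) equals (F_{i−2} − 1)·F_{i+2} + F_{2i+2} − F_i if i is odd, and (F_{i+2} − 1)·F_{i+2} − F_i if i is even. -/
lemma sols_finite (a b c : ℕ) (ha : 1 ≤ a) (hb : 1 ≤ b) (hc : 1 ≤ c) (n : ℤ) :
    Finite {v : ℕ × ℕ × ℕ // (v.1 : ℤ) * a + v.2.1 * b + v.2.2 * c = n} := by
  have h : {v : ℕ × ℕ × ℕ | (v.1 : ℤ) * a + v.2.1 * b + v.2.2 * c = n} ⊆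
      Set.Iic (n.toNat, n.toNat, n.toNat) := by
    rintro ⟨x, y, z⟩ hv
    simp only [Set.mem_setOf_eq] at hv
    have h1 : (0:ℤ) < a := by exact_mod_cast ha
    have h2 : (0:ℤ) < b := by exact_mod_cast hb
    have h3 : (0:ℤ) < c := by exact_mod_cast hc
    have hx : (x : ℤ) ≤ n := by nlinarith [(Int.natCast_nonneg x), (Int.natCast_nonneg y), (Int.natCast_nonneg z)]
    have hy : (y : ℤ) ≤ n := by nlinarith [(Int.natCast_nonneg x), (Int.natCast_nonneg y), (Int.natCast_nonneg z)]
    have hz : (z : ℤ) ≤ n := by nlinarith [(Int.natCast_nonneg x), (Int.natCast_nonneg y), (Int.natCast_nonneg z)]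
    simp only [Set.mem_Iic, Prod.mk_le_mk, Prod.le_def]
    refine ⟨?_, ?_, ?_⟩ <;> omega
  exact ((Set.finite_Iic _).subset h).to_subtype

lemma three_le_repCount (a b c : ℕ) (ha : 1 ≤ a) (hb : 1 ≤ b) (hc : 1 ≤ c) (n : ℤ)
    (t₁ t₂ t₃ : ℕ × ℕ × ℕ)
    (h₁ : (t₁.1 : ℤ) * a + t₁.2.1 * b + t₁.2.2 * c = n)
    (h₂ : (t₂.1 : ℤ) * a + t₂.2.1 * b + t₂.2.2 * c = n)
    (h₃ : (t₃.1 : ℤ) * a + t₃.2.1 * b + t₃.2.2 * c = n)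
    (d₁₂ : t₁ ≠ t₂) (d₁₃ : t₁ ≠ t₃) (d₂₃ : t₂ ≠ t₃) :
    3 ≤ repCount a b c n := by
  have := sols_finite a b c ha hb hc n
  have key := Nat.card_le_card_of_injective
    (α := Fin 3) (β := {v : ℕ × ℕ × ℕ // (v.1 : ℤ) * a + v.2.1 * b + v.2.2 * c = n})
    (![⟨t₁, h₁⟩, ⟨t₂, h₂⟩, ⟨t₃, h₃⟩]) ?_
  · simpa [repCount] using key
  · intro u v huv
    fin_cases u <;> fin_cases v <;> simp_all [Subtype.ext_iff]

lemma repCount_le_two (a b c : ℕ) (n : ℤ) (t₁ t₂ : ℕ × ℕ × ℕ)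
    (h : ∀ v : ℕ × ℕ × ℕ, (v.1 : ℤ) * a + v.2.1 * b + v.2.2 * c = n → v = t₁ ∨ v = t₂) :
    repCount a b c n ≤ 2 := by
  have key := Nat.card_le_card_of_injective
    (α := {v : ℕ × ℕ × ℕ // (v.1 : ℤ) * a + v.2.1 * b + v.2.2 * c = n}) (β := Fin 2)
    (fun v => if v.1 = t₁ then 0 else 1) ?_
  · simpa [repCount] using key
  · rintro ⟨u, hu⟩ ⟨v, hv⟩ huv
    apply Subtype.ext
    simp only at huv ⊢
    by_cases h1 : u = t₁
    · by_cases h2 : v = t₁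
      · rw [h1, h2]
      · rw [if_pos h1, if_neg h2] at huv; exact absurd huv (by decide)
    · by_cases h2 : v = t₁
      · rw [if_neg h1, if_pos h2] at huv; exact absurd huv (by decide)
      · rcases h u hu with h' | h'
        · exact absurd h' h1
        · rcases h v hv with h'' | h''
          · exact absurd h'' h2
          · rw [h', h'']

lemma cassini (n : ℕ) : (Nat.fib (n+1) : ℤ)^2 - Nat.fib n * Nat.fib (n+2) = (-1)^n := by
  induction n with
  | zero => simp
  | succ n ih =>
    have h2 : (Nat.fib (n+2) : ℤ) = Nat.fib n + Nat.fib (n+1) := by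
      rw [Nat.fib_add_two]; push_cast; ring
    have h3 : (Nat.fib (n+3) : ℤ) = Nat.fib (n+1) + Nat.fib (n+2) := by
      rw [show n+3 = (n+1)+2 by ring, Nat.fib_add_two]; push_cast; ring
    rw [show n+1+2 = n+3 by ring, h3, h2]
    rw [h2] at ih
    linear_combination (-1 : ℤ) * ih

lemma exists_residue (a b : ℕ) (ha : 0 < a) (hcop : Nat.Coprime a b) (n : ℤ) :
    ∃ y : ℕ, y < a ∧ (a : ℤ) ∣ n - b * y := by
  have hic : IsCoprime (a : ℤ) (b : ℤ) := by
    rw [Int.isCoprime_iff_gcd_eq_one]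
    simpa [Int.gcd] using hcop
  obtain ⟨u, v, huv⟩ := hic
  set y' : ℤ := (v * n) % a with hy'
  have hy0 : 0 ≤ y' := Int.emod_nonneg _ (by exact_mod_cast ha.ne')
  have hylt : y' < a := Int.emod_lt_of_pos _ (by exact_mod_cast ha)
  refine ⟨y'.toNat, by omega, ?_⟩
  rw [Int.toNat_of_nonneg hy0, hy', Int.emod_def]
  exact ⟨n*u + b*((v*n)/a), by linear_combination (-n) * huv⟩

lemma three_reps_A (a b c : ℕ) (ha : 1 ≤ a) (hb : 1 ≤ b) (hc : 1 ≤ c) (n : ℤ)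
    (M Y : ℕ) (h : (M : ℤ) * a + Y * b = n) (hM : 2 * b ≤ M) :
    3 ≤ repCount a b c n := by
  apply three_le_repCount a b c ha hb hc n (M, Y, 0) (M - b, Y + a, 0) (M - 2*b, Y + 2*a, 0)
  · simpa using h
  · have : ((M - b : ℕ) : ℤ) = (M : ℤ) - b := by omega
    simp only [this]; push_cast; linarith
  · have : ((M - 2*b : ℕ) : ℤ) = (M : ℤ) - 2*b := by omega
    simp only [this]; push_cast; linarith
  · simp only [ne_eq, Prod.mk.injEq]; omega
  · simp only [ne_eq, Prod.mk.injEq]; omega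
  · simp only [ne_eq, Prod.mk.injEq]; omega

lemma three_reps_B (a b c q : ℕ) (ha : 1 ≤ a) (hb : 1 ≤ b) (hq : 1 ≤ q)
    (hcq : c = q * (a + b)) (n : ℤ)
    (M Y : ℕ) (h : (M : ℤ) * a + Y * b = n) (hM : b + q ≤ M) (hY : q ≤ Y + a) :
    3 ≤ repCount a b c n := by
  have hc : 1 ≤ c := by subst hcq; exact Nat.mul_pos hq (by omega)
  apply three_le_repCount a b c ha hb hc n (M, Y, 0) (M - b, Y + a, 0) (M - b - q, Y + a - q, 1)
  · simpa using h
  · have : ((M - b : ℕ) : ℤ) = (M : ℤ) - b := by omega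
    simp only [this]; push_cast; linarith
  · have h1 : ((M - b - q : ℕ) : ℤ) = (M : ℤ) - b - q := by omega
    have h2 : ((Y + a - q : ℕ) : ℤ) = (Y : ℤ) + a - q := by omega
    have h3 : (c : ℤ) = q * (a + b) := by subst hcq; push_cast; ring
    simp only [h1, h2, h3]
    push_cast
    linarith
  · simp only [ne_eq, Prod.mk.injEq]; omega
  · simp only [ne_eq, Prod.mk.injEq]; omega
  · simp only [ne_eq, Prod.mk.injEq]; omega

lemma class_even (a p q b c : ℕ) (ha : 2 ≤ a) (hp : 1 ≤ p) (hpa : p < a)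
    (hq : q = a + p) (hb : b = a + q) (hcq : c = q * (a + b)) (hcop : Nat.Coprime a b) :
    ∀ v : ℕ × ℕ × ℕ, (v.1 : ℤ) * a + v.2.1 * b + v.2.2 * c =
        ((p : ℤ) - 1) * b + (2 * b - 1) * a →
      v = (2*b - 1, p - 1, 0) ∨ v = (b - 1, q - 1, 0) := by
  rintro ⟨x, y, z⟩ hv
  simp only at hv
  have hc3 : (c : ℤ) = q * (a + b) := by subst hcq; push_cast; ring
  have hqc : (q:ℤ) = a + p := by exact_mod_cast hq
  have hbc : (b:ℤ) = a + q := by exact_mod_cast hb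
  have haZ : (0:ℤ) < a := by exact_mod_cast (by omega : 0 < a)
  have hbZ : (0:ℤ) < b := by exact_mod_cast (by omega : 0 < b)
  have hpc : (p:ℤ) < a := by exact_mod_cast hpa
  have hXY : ((x:ℤ) + q * z) * a + ((y:ℤ) + q * z) * b
      = ((p : ℤ) - 1) * b + (2 * b - 1) * a := by
    linear_combination hv - (z : ℤ) * hc3
  have hX0 : (0:ℤ) ≤ (x:ℤ) + q * z := by positivity
  have hY0 : (0:ℤ) ≤ (y:ℤ) + q * z := by positivity
  have hdvd : (a : ℤ) ∣ ((y:ℤ) + q * z) - ((p : ℤ) - 1) := by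
    have hic : IsCoprime (a : ℤ) (b : ℤ) := by
      rw [Int.isCoprime_iff_gcd_eq_one]; simpa [Int.gcd] using hcop
    apply hic.dvd_of_dvd_mul_left
    exact ⟨(2 * (b:ℤ) - 1) - ((x:ℤ) + q * z), by linarith [hXY]⟩
  obtain ⟨j, hj⟩ := hdvd
  have hbY : (b:ℤ) * ((y:ℤ) + q * z) ≤ ((p : ℤ) - 1) * b + (2 * b - 1) * a := by nlinarith
  have hj0 : 0 ≤ j := by
    by_contra hc'
    push_neg at hc'
    have : (a:ℤ) * j ≤ a * (-1) := mul_le_mul_of_nonneg_left (by omega) (le_of_lt haZ)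
    linarith [hj, hY0]
  have hj1 : j ≤ 1 := by
    by_contra hc'
    push_neg at hc'
    have h2j : (a:ℤ) * 2 ≤ a * j := mul_le_mul_of_nonneg_left (by omega) (le_of_lt haZ)
    have : (b:ℤ) * ((p : ℤ) - 1 + a * 2) ≤ b * ((y:ℤ) + q * z) := by
      apply mul_le_mul_of_nonneg_left _ (le_of_lt hbZ)
      linarith [hj]
    nlinarith
  interval_cases j
  · have hYv : (y:ℤ) + q * z = (p : ℤ) - 1 := by linarith [hj]
    have hz : z = 0 := by
      by_contra hz'
      have h1 : (q:ℤ) * 1 ≤ q * z := mul_le_mul_of_nonneg_left (by omega) (by positivity)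
      have hy0 : (0:ℤ) ≤ y := by positivity
      linarith
    subst hz
    push_cast at hYv hXY
    have hxz : (x:ℤ) = 2*(b:ℤ) - 1 := by
      have hXv : (x:ℤ) * a = (2 * (b:ℤ) - 1) * a := by linear_combination hXY - (b:ℤ) * hYv
      exact mul_right_cancel₀ (ne_of_gt haZ) hXv
    left
    simp only [Prod.mk.injEq]
    exact ⟨by omega, by omega, trivial⟩
  · have hYv : (y:ℤ) + q * z = (p : ℤ) - 1 + a := by linarith [hj]
    have hz : z = 0 := by
      by_contra hz'
      have h1 : (q:ℤ) * 1 ≤ q * z := mul_le_mul_of_nonneg_left (by omega) (by positivity)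
      have hy0 : (0:ℤ) ≤ y := by positivity
      linarith
    subst hz
    push_cast at hYv hXY
    have hxz : (x:ℤ) = (b:ℤ) - 1 := by
      have hXv : (x:ℤ) * a = ((b:ℤ) - 1) * a := by linear_combination hXY - (b:ℤ) * hYv
      exact mul_right_cancel₀ (ne_of_gt haZ) hXv
    right
    simp only [Prod.mk.injEq]
    exact ⟨by omega, by omega, trivial⟩

lemma class_odd (a p q b c : ℕ) (ha : 2 ≤ a) (hp : 1 ≤ p) (hpa : p < a)
    (hq : q = a + p) (hb : b = a + q) (hcq : c = q * (a + b)) (hcop : Nat.Coprime a b) :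
    ∀ v : ℕ × ℕ × ℕ, (v.1 : ℤ) * a + v.2.1 * b + v.2.2 * c =
        ((a : ℤ) - 1) * b + ((b : ℤ) + q - 1) * a →
      v = (b + q - 1, a - 1, 0) ∨ v = (q - 1, 2*a - 1, 0) := by
  rintro ⟨x, y, z⟩ hv
  simp only at hv
  have hc3 : (c : ℤ) = q * (a + b) := by subst hcq; push_cast; ring
  have hqc : (q:ℤ) = a + p := by exact_mod_cast hq
  have hbc : (b:ℤ) = a + q := by exact_mod_cast hb
  have haZ : (0:ℤ) < a := by exact_mod_cast (by omega : 0 < a)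
  have hbZ : (0:ℤ) < b := by exact_mod_cast (by omega : 0 < b)
  have hpc : (p:ℤ) < a := by exact_mod_cast hpa
  have hXY : ((x:ℤ) + q * z) * a + ((y:ℤ) + q * z) * b
      = ((a : ℤ) - 1) * b + ((b : ℤ) + q - 1) * a := by
    linear_combination hv - (z : ℤ) * hc3
  have hX0 : (0:ℤ) ≤ (x:ℤ) + q * z := by positivity
  have hY0 : (0:ℤ) ≤ (y:ℤ) + q * z := by positivity
  have hdvd : (a : ℤ) ∣ ((y:ℤ) + q * z) - ((a : ℤ) - 1) := by
    have hic : IsCoprime (a : ℤ) (b : ℤ) := by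
      rw [Int.isCoprime_iff_gcd_eq_one]; simpa [Int.gcd] using hcop
    apply hic.dvd_of_dvd_mul_left
    exact ⟨((b:ℤ) + q - 1) - ((x:ℤ) + q * z), by linarith [hXY]⟩
  obtain ⟨j, hj⟩ := hdvd
  have hbY : (b:ℤ) * ((y:ℤ) + q * z) ≤ ((a : ℤ) - 1) * b + ((b : ℤ) + q - 1) * a := by nlinarith
  have hj0 : 0 ≤ j := by
    by_contra hc'
    push_neg at hc'
    have : (a:ℤ) * j ≤ a * (-1) := mul_le_mul_of_nonneg_left (by omega) (le_of_lt haZ)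
    linarith [hj, hY0]
  have hj1 : j ≤ 1 := by
    by_contra hc'
    push_neg at hc'
    have h2j : (a:ℤ) * 2 ≤ a * j := mul_le_mul_of_nonneg_left (by omega) (le_of_lt haZ)
    have : (b:ℤ) * ((a : ℤ) - 1 + a * 2) ≤ b * ((y:ℤ) + q * z) := by
      apply mul_le_mul_of_nonneg_left _ (le_of_lt hbZ)
      linarith [hj]
    nlinarith
  interval_cases j
  · have hYv : (y:ℤ) + q * z = (a : ℤ) - 1 := by linarith [hj]
    have hz : z = 0 := by
      by_contra hz'
      have h1 : (q:ℤ) * 1 ≤ q * z := mul_le_mul_of_nonneg_left (by omega) (by positivity)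
      have hy0 : (0:ℤ) ≤ y := by positivity
      linarith
    subst hz
    push_cast at hYv hXY
    have hxz : (x:ℤ) = (b:ℤ) + q - 1 := by
      have hXv : (x:ℤ) * a = ((b:ℤ) + q - 1) * a := by linear_combination hXY - (b:ℤ) * hYv
      exact mul_right_cancel₀ (ne_of_gt haZ) hXv
    left
    simp only [Prod.mk.injEq]
    exact ⟨by omega, by omega, trivial⟩
  · have hYv : (y:ℤ) + q * z = (a : ℤ) - 1 + a := by linarith [hj]
    have hXv' : ((x:ℤ) + q * z) = (q:ℤ) - 1 := by
      have hXv : ((x:ℤ) + q * z) * a = ((q:ℤ) - 1) * a := by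
        linear_combination hXY - (b:ℤ) * hYv
      exact mul_right_cancel₀ (ne_of_gt haZ) hXv
    have hz : z = 0 := by
      by_contra hz'
      have h1 : (q:ℤ) * 1 ≤ q * z := mul_le_mul_of_nonneg_left (by omega) (by positivity)
      have hx0 : (0:ℤ) ≤ x := by positivity
      linarith
    subst hz
    push_cast at hYv hXv'
    right
    simp only [Prod.mk.injEq]
    exact ⟨by omega, by omega, trivial⟩

lemma main_even (a p q b c : ℕ) (ha : 2 ≤ a) (hp : 1 ≤ p) (hpa : p < a)
    (hq : q = a + p) (hb : b = a + q) (hcq : c = q * (a + b)) (hcop : Nat.Coprime a b)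
    (hcas : q * q = a * b + 1) :
    IsPFrob 2 a b c (((p : ℤ) - 1) * b + (2 * b - 1) * a) := by
  constructor
  · exact repCount_le_two a b c _ _ _ (class_even a p q b c ha hp hpa hq hb hcq hcop)
  · intro n hn
    simp only [Set.mem_setOf_eq] at hn
    by_contra hlt
    push_neg at hlt
    obtain ⟨y, hy, m, hm⟩ := exists_residue a b (by omega) hcop n
    have haZ : (0:ℤ) < a := by exact_mod_cast (by omega : 0 < a)
    have hbZ : (0:ℤ) < b := by exact_mod_cast (by omega : 0 < b)
    have hqZ : (q:ℤ) = a + p := by exact_mod_cast hq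
    have hbZ' : (b:ℤ) = a + q := by exact_mod_cast hb
    have hcasZ : (q:ℤ) * q = a * b + 1 := by exact_mod_cast hcas
    have hyZ : (y:ℤ) < a := by exact_mod_cast hy
    by_cases hyp : y < p
    · have hby : (b:ℤ) * y ≤ b * ((p:ℤ) - 1) := by
        apply mul_le_mul_of_nonneg_left _ (le_of_lt hbZ)
        have : (y:ℤ) ≤ (p:ℤ) - 1 := by omega
        linarith
      have ham : (a:ℤ) * (2*b - 1) < a * m := by linarith
      have hm2 : 2 * (b:ℤ) ≤ m := by
        by_contra hc'
        push_neg at hc'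
        have : (a:ℤ) * m ≤ a * (2*b - 1) :=
          mul_le_mul_of_nonneg_left (by omega) (le_of_lt haZ)
        linarith
      have hmn : (m.toNat : ℤ) = m := Int.toNat_of_nonneg (by linarith)
      have h3 := three_reps_A a b c (by omega) (by omega) (by subst hcq; exact Nat.mul_pos (by omega) (by omega)) n
        m.toNat y (by rw [hmn]; linarith) (by omega)
      omega
    · have hby : (b:ℤ) * y ≤ b * ((a:ℤ) - 1) := by
        apply mul_le_mul_of_nonneg_left _ (le_of_lt hbZ)
        linarith
      have hbq : (b:ℤ) * q = a * q + q * q := by rw [hbZ']; ring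
      have key : (a:ℤ) * ((b:ℤ) + q - 1) + 1 ≤ a * m := by nlinarith
      have hm2 : (b:ℤ) + q ≤ m := by
        by_contra hc'
        push_neg at hc'
        have : (a:ℤ) * m ≤ a * ((b:ℤ) + q - 1) :=
          mul_le_mul_of_nonneg_left (by omega) (le_of_lt haZ)
        linarith
      have hmn : (m.toNat : ℤ) = m := Int.toNat_of_nonneg (by linarith [Int.natCast_nonneg q])
      have h3 := three_reps_B a b c q (by omega) (by omega) (by omega) hcq n
        m.toNat y (by rw [hmn]; linarith) (by omega) (by omega)
      omega

lemma main_odd (a p q b c : ℕ) (ha : 2 ≤ a) (hp : 1 ≤ p) (hpa : p < a)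
    (hq : q = a + p) (hb : b = a + q) (hcq : c = q * (a + b)) (hcop : Nat.Coprime a b)
    (hcas : a * q = b * p + 1) :
    IsPFrob 2 a b c (((a : ℤ) - 1) * b + ((b : ℤ) + q - 1) * a) := by
  constructor
  · exact repCount_le_two a b c _ _ _ (class_odd a p q b c ha hp hpa hq hb hcq hcop)
  · intro n hn
    simp only [Set.mem_setOf_eq] at hn
    by_contra hlt
    push_neg at hlt
    obtain ⟨y, hy, m, hm⟩ := exists_residue a b (by omega) hcop n
    have haZ : (0:ℤ) < a := by exact_mod_cast (by omega : 0 < a)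
    have hbZ : (0:ℤ) < b := by exact_mod_cast (by omega : 0 < b)
    have hqZ : (q:ℤ) = a + p := by exact_mod_cast hq
    have hbZ' : (b:ℤ) = a + q := by exact_mod_cast hb
    have hcasZ : (a:ℤ) * q = b * p + 1 := by exact_mod_cast hcas
    have hyZ : (y:ℤ) < a := by exact_mod_cast hy
    by_cases hyp : y < p
    · have hby : (b:ℤ) * y ≤ b * ((p:ℤ) - 1) := by
        apply mul_le_mul_of_nonneg_left _ (le_of_lt hbZ)
        have : (y:ℤ) ≤ (p:ℤ) - 1 := by omega
        linarith
      have ham : (a:ℤ) * (2*b - 1) < a * m := by nlinarith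
      have hm2 : 2 * (b:ℤ) ≤ m := by
        by_contra hc'
        push_neg at hc'
        have : (a:ℤ) * m ≤ a * (2*b - 1) :=
          mul_le_mul_of_nonneg_left (by omega) (le_of_lt haZ)
        linarith
      have hmn : (m.toNat : ℤ) = m := Int.toNat_of_nonneg (by linarith)
      have h3 := three_reps_A a b c (by omega) (by omega) (by subst hcq; exact Nat.mul_pos (by omega) (by omega)) n
        m.toNat y (by rw [hmn]; linarith) (by omega)
      omega
    · have hby : (b:ℤ) * y ≤ b * ((a:ℤ) - 1) := by
        apply mul_le_mul_of_nonneg_left _ (le_of_lt hbZ)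
        linarith
      have key : (a:ℤ) * ((b:ℤ) + q - 1) < a * m := by linarith
      have hm2 : (b:ℤ) + q ≤ m := by
        by_contra hc'
        push_neg at hc'
        have : (a:ℤ) * m ≤ a * ((b:ℤ) + q - 1) :=
          mul_le_mul_of_nonneg_left (by omega) (le_of_lt haZ)
        linarith
      have hmn : (m.toNat : ℤ) = m := Int.toNat_of_nonneg (by linarith [Int.natCast_nonneg q])
      have h3 := three_reps_B a b c q (by omega) (by omega) (by omega) hcq n
        m.toNat y (by rw [hmn]; linarith) (by omega) (by omega)
      omega

theorem stmt9 (i : ℕ) (hi : 3 ≤ i) :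
    letI F := Nat.fib
    IsPFrob 2 (F i) (F (i + 2)) (F (2 * i + 2))
      (if Odd i then ((F (i - 2) : ℤ) - 1) * F (i + 2) + F (2 * i + 2) - F i
       else ((F (i + 2) : ℤ) - 1) * F (i + 2) - F i) := by
  obtain ⟨k, rfl⟩ : ∃ k, i = k + 3 := ⟨i - 3, by omega⟩
  show IsPFrob 2 (Nat.fib (k+3)) (Nat.fib (k+3+2)) (Nat.fib (2*(k+3)+2)) _
  rw [show k+3+2 = k+5 by omega, show k+3-2 = k+1 by omega]
  set a := Nat.fib (k+3) with hadef
  set p := Nat.fib (k+2) with hpdef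
  set q := Nat.fib (k+4) with hqdef
  set b := Nat.fib (k+5) with hbdef
  set r := Nat.fib (k+1) with hrdef
  have hq : q = a + p := by rw [hqdef, hadef, hpdef, Nat.fib_add_two]; try ring
  have hb : b = a + q := by rw [hbdef, hadef, hqdef, show k+5 = (k+3)+2 by ring, Nat.fib_add_two]; try ring
  have har : a = p + r := by rw [hadef, hpdef, hrdef, show k+3 = (k+1)+2 by ring, Nat.fib_add_two]; try ring
  have hp : 1 ≤ p := Nat.fib_pos.2 (by omega)
  have hr : 1 ≤ r := Nat.fib_pos.2 (by omega)
  have ha : 2 ≤ a := by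
    calc 2 = Nat.fib 3 := by decide
    _ ≤ Nat.fib (k+3) := Nat.fib_mono (by omega)
  have hpa : p < a := by omega
  have hidx : 2 * (k+3) + 2 = (k+3) + (k+4) + 1 := by ring
  have hcq : Nat.fib (2*(k+3)+2) = q * (a + b) := by
    rw [hidx, Nat.fib_add, hadef, hqdef, hbdef]; ring
  have hcop : Nat.Coprime a b := by
    have h1 : Nat.gcd a b = Nat.gcd a q := by rw [hb, add_comm, Nat.gcd_add_self_right]
    have h2 : Nat.Coprime a q := Nat.fib_coprime_fib_succ (k+3)
    unfold Nat.Coprime at *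
    omega
  by_cases hodd : Odd (k+3)
  · rw [if_pos hodd]
    have hkev : Even (k+2) := by
      rcases hodd with ⟨t, ht⟩
      exact ⟨t, by omega⟩
    have hcasZ : (a:ℤ) * q = b * p + 1 := by
      have hc := cassini (k+2)
      rw [hkev.neg_one_pow] at hc
      have hqZ : (q:ℤ) = a + p := by exact_mod_cast hq
      have hbZ : (b:ℤ) = a + q := by exact_mod_cast hb
      linear_combination hc + (a:ℤ) * hqZ - (p:ℤ) * hbZ
    have hcas : a * q = b * p + 1 := by exact_mod_cast hcasZ
    have hgoal : ((r : ℤ) - 1) * b + (Nat.fib (2*(k+3)+2) : ℤ) - a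
        = ((a : ℤ) - 1) * b + ((b : ℤ) + q - 1) * a := by
      have hc3 : (Nat.fib (2*(k+3)+2) : ℤ) = q * (a + b) := by rw [hcq]; push_cast; ring
      have haZ : (a:ℤ) = p + r := by exact_mod_cast har
      have hqZ : (q:ℤ) = a + p := by exact_mod_cast hq
      have hbZ : (b:ℤ) = a + q := by exact_mod_cast hb
      linear_combination hc3 - (b:ℤ) * haZ + (b:ℤ) * hqZ
    rw [hgoal]
    exact main_odd a p q b (Nat.fib (2*(k+3)+2)) ha hp hpa hq hb hcq hcop hcas
  · rw [if_neg hodd]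
    have hkev : Even (k+3) := Nat.not_odd_iff_even.1 hodd
    have hcasZ : (q:ℤ) * q = a * b + 1 := by
      have hc := cassini (k+3)
      rw [hkev.neg_one_pow] at hc
      linear_combination hc
    have hcas : q * q = a * b + 1 := by exact_mod_cast hcasZ
    have hgoal : ((b : ℤ) - 1) * b - a = ((p : ℤ) - 1) * b + (2 * b - 1) * a := by
      have hqZ : (q:ℤ) = a + p := by exact_mod_cast hq
      have hbZ : (b:ℤ) = a + q := by exact_mod_cast hb
      linear_combination (b:ℤ) * hbZ + (b:ℤ) * hqZ
    rw [hgoal]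
    exact main_even a p q b (Nat.fib (2*(k+3)+2)) ha hp hpa hq hb hcq hcop hcas
end
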